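/- Let D ⊂ ℝ^d be a bounded open set, let F be a real-valued (or extended real-valued) functional on the open subsets of D that is increasing with respect to set inclusion (Ω₁ ⊆ Ω₂ implies F(Ω₁) ≤ F(Ω₂)), let Ω₀ ⊆ D be open, and let ε > 0. Then for every open Ω ⊆ D there exists h ≥ 0, namely h = d_{H^c}(Ω ∩ Ω₀, Ω₀), such that F(K_h) + h²/(2ε) ≤ F(Ω) + d_{H^c}(Ω, Ω₀)²/(2ε), where K_h = D \ {x : dist(x, closure(D) \ Ω₀) ≤ h}. -/

import Mathlib

/-!
Shrinking `Ω` to `Ω ∩ Ω₀` can only decrease the distance to `Ω₀`, because the distance to a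
union is the minimum of the distances to the pieces. If `h = d_{H^c}(Ω ∩ Ω₀, Ω₀)`, every point of
`D` outside `Ω ∩ Ω₀` is at distance at most `h` from `closure D \ Ω₀`, so `K_h ⊆ Ω ∩ Ω₀ ⊆ Ω`;
monotonicity of `F` and `h ≤ d_{H^c}(Ω, Ω₀)` conclude.
-/

open Metric Set

/-- The Hausdorff complementary distance on open subsets of a bounded open set `D ⊂ ℝ^d`:
`d_{H^c}(Ω₁,Ω₂) = sup_{x ∈ closure D} |dist(x, closure D \ Ω₁) − dist(x, closure D \ Ω₂)|`. -/
noncomputable def dHc {d : ℕ} (D Ω₁ Ω₂ : Set (EuclideanSpace ℝ (Fin d))) : ℝ :=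
  ⨆ x : closure D,
    |Metric.infDist (x : EuclideanSpace ℝ (Fin d)) (closure D \ Ω₁)
      - Metric.infDist (x : EuclideanSpace ℝ (Fin d)) (closure D \ Ω₂)|

section InfDist

variable {E : Type*} [PseudoMetricSpace E] {x : E} {s t : Set E}

lemma infDist_union_of_nonempty (hs : s.Nonempty) (ht : t.Nonempty) :
    infDist x (s ∪ t) = min (infDist x s) (infDist x t) := by
  simp only [infDist, infEDist_union, ENNReal.toReal_min (infEDist_ne_top hs) (infEDist_ne_top ht)]

lemma abs_infDist_union_sub_le (x : E) (s t : Set E) :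
    |infDist x (s ∪ t) - infDist x t| ≤ |infDist x s - infDist x t| := by
  rcases s.eq_empty_or_nonempty with rfl | hs
  · simp
  rcases t.eq_empty_or_nonempty with rfl | ht
  · simp
  rw [infDist_union_of_nonempty hs ht]
  simpa using abs_min_sub_min_le_max (infDist x s) (infDist x t) (infDist x t) (infDist x t)

lemma infDist_le_diam_of_subset (ht : Bornology.IsBounded t) (hx : x ∈ t) (hst : s ⊆ t) :
    infDist x s ≤ diam t := by
  rcases s.eq_empty_or_nonempty with rfl | ⟨y, hy⟩
  · simpa using diam_nonneg
  · exact (infDist_le_dist_of_mem hy).trans (dist_le_diam_of_mem ht hx (hst hy))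

end InfDist

section dHc

variable {d : ℕ} {D : Set (EuclideanSpace ℝ (Fin d))}

lemma dHc_nonneg (D Ω₁ Ω₂ : Set (EuclideanSpace ℝ (Fin d))) : 0 ≤ dHc D Ω₁ Ω₂ :=
  Real.iSup_nonneg fun _ => abs_nonneg _

lemma abs_infDist_sub_le_dHc (hDb : Bornology.IsBounded D) (Ω₁ Ω₂ : Set (EuclideanSpace ℝ (Fin d)))
    {x : EuclideanSpace ℝ (Fin d)} (hx : x ∈ closure D) :
    |infDist x (closure D \ Ω₁) - infDist x (closure D \ Ω₂)| ≤ dHc D Ω₁ Ω₂ := by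
  refine le_ciSup (f := fun y : closure D => |infDist (y : EuclideanSpace ℝ (Fin d))
    (closure D \ Ω₁) - infDist (y : EuclideanSpace ℝ (Fin d)) (closure D \ Ω₂)|)
    ⟨diam (closure D), ?_⟩ ⟨x, hx⟩
  rintro _ ⟨y, rfl⟩
  exact abs_sub_le_of_nonneg_of_le infDist_nonneg
    (infDist_le_diam_of_subset hDb.closure y.2 sdiff_subset) infDist_nonneg
    (infDist_le_diam_of_subset hDb.closure y.2 sdiff_subset)

lemma dHc_inter_le (hDb : Bornology.IsBounded D) (Ω Ω₀ : Set (EuclideanSpace ℝ (Fin d))) :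
    dHc D (Ω ∩ Ω₀) Ω₀ ≤ dHc D Ω Ω₀ := by
  refine Real.iSup_le (fun x => ?_) (dHc_nonneg D Ω Ω₀)
  rw [sdiff_inter]
  exact (abs_infDist_union_sub_le _ _ _).trans (abs_infDist_sub_le_dHc hDb Ω Ω₀ x.2)

lemma diff_setOf_infDist_le_dHc_subset (hDb : Bornology.IsBounded D)
    (Ω Ω₀ : Set (EuclideanSpace ℝ (Fin d))) :
    D \ {x | infDist x (closure D \ Ω₀) ≤ dHc D Ω Ω₀} ⊆ Ω := by
  intro x ⟨hxD, hx⟩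
  by_contra hxΩ
  have hxD' : x ∈ closure D := subset_closure hxD
  have hbound := abs_infDist_sub_le_dHc hDb Ω Ω₀ hxD'
  rw [infDist_zero_of_mem (show x ∈ closure D \ Ω from ⟨hxD', hxΩ⟩), zero_sub, abs_neg,
    abs_of_nonneg infDist_nonneg] at hbound
  exact hx hbound

end dHc

theorem incremental_dHc_inner_parallel_competitor_general
    {d : ℕ} (D Ω₀ : Set (EuclideanSpace ℝ (Fin d)))
    (hD : IsOpen D) (hDb : Bornology.IsBounded D)
    (F : Set (EuclideanSpace ℝ (Fin d)) → WithTop ℝ)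
    (hF : ∀ Ω₁ Ω₂ : Set (EuclideanSpace ℝ (Fin d)),
      IsOpen Ω₁ → Ω₁ ⊆ D → IsOpen Ω₂ → Ω₂ ⊆ D → Ω₁ ⊆ Ω₂ → F Ω₁ ≤ F Ω₂)
    (ε : ℝ) (hε : 0 < ε) :
    ∀ Ω : Set (EuclideanSpace ℝ (Fin d)), IsOpen Ω → Ω ⊆ D →
      ∃ h : ℝ, 0 ≤ h ∧ h = dHc D (Ω ∩ Ω₀) Ω₀ ∧
        F (D \ {x | Metric.infDist x (closure D \ Ω₀) ≤ h})
            + ((h ^ 2 / (2 * ε) : ℝ) : WithTop ℝ)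
          ≤ F Ω + ((dHc D Ω Ω₀ ^ 2 / (2 * ε) : ℝ) : WithTop ℝ) := by
  intro Ω hΩ hΩD
  refine ⟨_, dHc_nonneg _ _ _, rfl, add_le_add (hF _ _ ?_ sdiff_subset hΩ hΩD ?_) ?_⟩
  · exact hD.sdiff (isClosed_le (continuous_infDist_pt _) continuous_const)
  · exact (diff_setOf_infDist_le_dHc_subset hDb _ _).trans inter_subset_left
  · have := dHc_inter_le hDb Ω Ω₀
    have := dHc_nonneg D (Ω ∩ Ω₀) Ω₀
    exact WithTop.coe_le_coe.2 (by gcongr)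

/-- For a functional `F` on the open subsets of `D` increasing with respect to set inclusion,
the incremental problem `min_Ω F(Ω) + d_{H^c}(Ω,Ω₀)²/(2ε)` admits competitors of the special
form `K_h = D \ ((closure D \ Ω₀) + B̄_h)`: for every open `Ω ⊆ D`, taking
`h = d_{H^c}(Ω ∩ Ω₀, Ω₀)` one has `F(K_h) + h²/(2ε) ≤ F(Ω) + d_{H^c}(Ω,Ω₀)²/(2ε)`. -/
theorem incremental_dHc_inner_parallel_competitor
    {d : ℕ} (D Ω₀ : Set (EuclideanSpace ℝ (Fin d)))
    (hD : IsOpen D) (hDb : Bornology.IsBounded D)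
    (hΩ₀ : IsOpen Ω₀) (hΩ₀D : Ω₀ ⊆ D)
    (F : Set (EuclideanSpace ℝ (Fin d)) → WithTop ℝ)
    (hF : ∀ Ω₁ Ω₂ : Set (EuclideanSpace ℝ (Fin d)),
      IsOpen Ω₁ → Ω₁ ⊆ D → IsOpen Ω₂ → Ω₂ ⊆ D → Ω₁ ⊆ Ω₂ → F Ω₁ ≤ F Ω₂)
    (ε : ℝ) (hε : 0 < ε) :
    ∀ Ω : Set (EuclideanSpace ℝ (Fin d)), IsOpen Ω → Ω ⊆ D →
      ∃ h : ℝ, 0 ≤ h ∧ h = dHc D (Ω ∩ Ω₀) Ω₀ ∧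
        F (D \ {x | Metric.infDist x (closure D \ Ω₀) ≤ h})
            + ((h ^ 2 / (2 * ε) : ℝ) : WithTop ℝ)
          ≤ F Ω + ((dHc D Ω Ω₀ ^ 2 / (2 * ε) : ℝ) : WithTop ℝ) :=
  incremental_dHc_inner_parallel_competitor_general D Ω₀ hD hDb F hF ε hε
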